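/- Let θ = (θ₁, θ₂, θ₃) ∈ ℝ³ with θ₁² + θ₂² + θ₃² ≤ 1 and let λ = (λ₁, λ₂, λ₃) ∈ ℝ³ with λ₁² + λ₂² + λ₃² = 1 and λ₃ ≠ 0. Then (1/2)·[(1 − (λ₁θ₁ + λ₂θ₂ + λ₃θ₃)²) + (1 − (λ₁θ₁ + λ₂θ₂ − λ₃θ₃)²)]/λ₃² ≥ 1 − θ₃², and equality holds for λ = (0, 0, 1) and λ = (0, 0, −1). -/

import Mathlib

/-!
Averaging over `±θ₃` cancels the cross term, so the average variance is
`(1 - (l₁θ₁ + l₂θ₂)² - l₃²θ₃²) / l₃²`. By Cauchy–Schwarz in the plane,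
`(l₁θ₁ + l₂θ₂)² ≤ (l₁² + l₂²)(θ₁² + θ₂²) ≤ 1 - l₃²`, which is the inequality once `l₃²` is cleared.
-/

lemma half_mul_one_sub_sq_add_add_one_sub_sq_sub {K : Type*} [Field K] [NeZero (2 : K)]
    (a b : K) :
    (1 / 2) * ((1 - (a + b) ^ 2) + (1 - (a - b) ^ 2)) = 1 - a ^ 2 - b ^ 2 := by
  field_simp
  ring

lemma mul_add_mul_sq_le_sq_add_sq_mul_sq_add_sq {R : Type*} [CommRing R] [LinearOrder R]
    [IsStrictOrderedRing R] (a b c d : R) :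
    (a * c + b * d) ^ 2 ≤ (a ^ 2 + b ^ 2) * (c ^ 2 + d ^ 2) := by
  nlinarith [sq_nonneg (a * d - b * c)]

lemma sq_mul_add_mul_le_one_sub_sq {R : Type*} [CommRing R] [LinearOrder R]
    [IsStrictOrderedRing R] {θ₁ θ₂ θ₃ l₁ l₂ l₃ : R}
    (hθ : θ₁ ^ 2 + θ₂ ^ 2 + θ₃ ^ 2 ≤ 1) (hl : l₁ ^ 2 + l₂ ^ 2 + l₃ ^ 2 = 1) :
    (l₁ * θ₁ + l₂ * θ₂) ^ 2 ≤ 1 - l₃ ^ 2 :=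
  calc (l₁ * θ₁ + l₂ * θ₂) ^ 2 ≤ (l₁ ^ 2 + l₂ ^ 2) * (θ₁ ^ 2 + θ₂ ^ 2) :=
        mul_add_mul_sq_le_sq_add_sq_mul_sq_add_sq l₁ l₂ θ₁ θ₂
    _ ≤ (l₁ ^ 2 + l₂ ^ 2) * 1 := by
        gcongr
        linarith [sq_nonneg θ₃]
    _ = 1 - l₃ ^ 2 := by rw [mul_one, ← hl]; ring

theorem average_variance_ge
    (θ₁ θ₂ θ₃ : ℝ) (hθ : θ₁ ^ 2 + θ₂ ^ 2 + θ₃ ^ 2 ≤ 1)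
    (l₁ l₂ l₃ : ℝ) (hl : l₁ ^ 2 + l₂ ^ 2 + l₃ ^ 2 = 1) (hl₃ : l₃ ≠ 0) :
    1 - θ₃ ^ 2 ≤
      (1 / 2) * ((1 - (l₁ * θ₁ + l₂ * θ₂ + l₃ * θ₃) ^ 2) +
        (1 - (l₁ * θ₁ + l₂ * θ₂ - l₃ * θ₃) ^ 2)) / l₃ ^ 2 ∧
    ((l₁ = 0 ∧ l₂ = 0 ∧ (l₃ = 1 ∨ l₃ = -1)) →
      (1 / 2) * ((1 - (l₁ * θ₁ + l₂ * θ₂ + l₃ * θ₃) ^ 2) +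
        (1 - (l₁ * θ₁ + l₂ * θ₂ - l₃ * θ₃) ^ 2)) / l₃ ^ 2 = 1 - θ₃ ^ 2) := by
  rw [half_mul_one_sub_sq_add_add_one_sub_sq_sub]
  refine ⟨?_, ?_⟩
  · rw [le_div_iff₀ (by positivity)]
    nlinarith [sq_mul_add_mul_le_one_sub_sq hθ hl]
  · rintro ⟨rfl, rfl, rfl | rfl⟩ <;> ring
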